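/- arXiv:2105.09723 — 5 statements merged into one kernel-verified Lean document; each statement's English description precedes it below -/
import Mathlib

section
/- If F is a stack on X, then the collection G = {B ∩ C : B ∈ F and C ∈ F*} is a grill on X containing both F and F*. -/
def IsStack {X : Type*} (F : Set (Set X)) : Prop :=
  F.Nonempty ∧ ∅ ∉ F ∧ ∀ A B : Set X, A ∈ F → A ⊆ B → B ∈ F

def mesh {X : Type*} (F : Set (Set X)) : Set (Set X) := {A | Aᶜ ∉ F}

def IsSetFilter {X : Type*} (F : Set (Set X)) : Prop :=
  IsStack F ∧ ∀ A B : Set X, A ∈ F → B ∈ F → A ∩ B ∈ F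

def IsGrill {X : Type*} (F : Set (Set X)) : Prop :=
  IsStack F ∧ ∀ A B : Set X, A ∪ B ∈ F → A ∈ F ∨ B ∈ F

def IsUltra {X : Type*} (F : Set (Set X)) : Prop := IsSetFilter F ∧ IsGrill F

theorem stmt_7 {X : Type*} [Nonempty X] (F : Set (Set X)) (hF : IsStack F) :
    IsGrill {A : Set X | ∃ B ∈ F, ∃ C ∈ mesh F, A = B ∩ C} ∧
      F ⊆ {A : Set X | ∃ B ∈ F, ∃ C ∈ mesh F, A = B ∩ C} ∧
      mesh F ⊆ {A : Set X | ∃ B ∈ F, ∃ C ∈ mesh F, A = B ∩ C} := by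
  obtain ⟨⟨B0, hB0⟩, hne, hup⟩ := hF
  set G : Set (Set X) := {A : Set X | ∃ B ∈ F, ∃ C ∈ mesh F, A = B ∩ C} with hG
  have hXmesh : (Set.univ : Set X) ∈ mesh F := by
    simp only [mesh, Set.mem_setOf_eq, Set.compl_univ]; exact hne
  -- key: superset characterization
  have hkey : ∀ A : Set X, (∃ B ∈ F, ∃ C ∈ mesh F, B ∩ C ⊆ A) → A ∈ G := by
    rintro A ⟨B, hB, C, hC, hsub⟩
    refine ⟨B ∪ A, hup B _ hB Set.subset_union_left, C ∪ A, ?_, ?_⟩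
    · intro h
      exact hC (hup _ _ h (by rw [Set.compl_union]; exact Set.inter_subset_left))
    · ext x
      constructor
      · intro hx
        exact ⟨Or.inr hx, Or.inr hx⟩
      · rintro ⟨hB' | hA, hC' | hA⟩
        · exact hsub ⟨hB', hC'⟩
        all_goals assumption
  have hFsub : F ⊆ G := fun B hB => ⟨B, hB, Set.univ, hXmesh, (Set.inter_univ B).symm⟩
  have hMsub : mesh F ⊆ G := fun C hC =>
    ⟨B0 ∪ C, hup B0 _ hB0 Set.subset_union_left, C, hC,
      (Set.inter_eq_right.mpr Set.subset_union_right).symm⟩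
  refine ⟨⟨⟨⟨B0, hFsub hB0⟩, ?_, ?_⟩, ?_⟩, hFsub, hMsub⟩
  · rintro ⟨B, hB, C, hC, hBC⟩
    apply hC
    apply hup B _ hB
    intro x hx
    by_contra hxc
    have : x ∈ (∅ : Set X) := hBC ▸ ⟨hx, not_not.mp hxc⟩
    exact this
  · rintro A D ⟨B, hB, C, hC, hBC⟩ hAD
    exact hkey D ⟨B, hB, C, hC, hBC ▸ hAD⟩
  · rintro A B ⟨P, hP, Q, hQ, hPQ⟩
    by_cases h : Qᶜ ∪ A ∈ F
    · left
      exact hkey A ⟨Qᶜ ∪ A, h, Q, hQ, by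
        rintro x ⟨hx1 | hx1, hx2⟩
        · exact absurd hx2 hx1
        · exact hx1⟩
    · right
      refine hkey B ⟨P, hP, Q \ A, ?_, ?_⟩
      · intro hc
        apply h
        apply hup _ _ hc
        intro x hx
        by_cases hxQ : x ∈ Q
        · exact Or.inr (by_contra fun hxA => hx ⟨hxQ, hxA⟩)
        · exact Or.inl hxQ
      · rintro x ⟨hxP, hxQ, hxA⟩
        have : x ∈ A ∪ B := hPQ ▸ ⟨hxP, hxQ⟩
        rcases this with h' | h'
        · exact absurd h' hxA
        · exact h'
end

section
/- In any semigroup S, the collection of piecewise syndetic sets is a grill: if A ∪ B is piecewise syndetic, then A is piecewise syndetic or B is piecewise syndetic (Brown's lemma). -/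
def preim {S : Type*} [Mul S] (x : S) (A : Set S) : Set S := {y | x * y ∈ A}

def Syndetic {S : Type*} [Semigroup S] (A : Set S) : Prop :=
  ∃ H : Finset S, H.Nonempty ∧ (⋃ h ∈ H, preim h A) = Set.univ

def Thick {S : Type*} [Semigroup S] (A : Set S) : Prop :=
  ∀ H : Finset S, H.Nonempty → (⋂ h ∈ H, preim h A).Nonempty

def PwSyndetic {S : Type*} [Semigroup S] (A : Set S) : Prop :=
  ∃ H : Finset S, H.Nonempty ∧ Thick (⋃ h ∈ H, preim h A)

def SynRel {S : Type*} [Semigroup S] (F G : Set (Set S)) : Set (Set S) :=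
  {A | ∀ B ∈ F, ∃ H : Finset S, H.Nonempty ∧ ↑H ⊆ B ∧ (⋃ h ∈ H, preim h A) ∈ G}

def ThickRel {S : Type*} [Semigroup S] (F G : Set (Set S)) : Set (Set S) :=
  {A | ∃ B ∈ F, ∀ H : Finset S, H.Nonempty → ↑H ⊆ B → (⋂ h ∈ H, preim h A) ∈ mesh G}

def uprod {S : Type*} [Semigroup S] (p q : Set (Set S)) : Set (Set S) :=
  {A | {x | preim x A ∈ q} ∈ p}

open scoped Pointwise in
theorem stmt_9 {S : Type*} [Semigroup S] (A B : Set S)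
    (h : PwSyndetic (A ∪ B)) : PwSyndetic A ∨ PwSyndetic B := by
  classical
  by_cases hA : PwSyndetic A
  · exact Or.inl hA
  right
  obtain ⟨H, hHne, hT⟩ := h
  have hnot : ¬ Thick (⋃ h ∈ H, preim h A) := fun t => hA ⟨H, hHne, t⟩
  simp only [Thick, not_forall] at hnot
  obtain ⟨F, hFne, hFempty⟩ := hnot
  rw [Set.not_nonempty_iff_eq_empty] at hFempty
  have key : ∀ x : S, ∃ f ∈ F, ∀ g ∈ H, g * (f * x) ∉ A := by
    intro x
    by_contra hc
    push_neg at hc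
    have hx : x ∈ ⋂ f ∈ F, preim f (⋃ h ∈ H, preim h A) := by
      simp only [Set.mem_iInter]
      intro f hf
      obtain ⟨g, hg, hgA⟩ := hc f hf
      simp only [preim, Set.mem_setOf_eq, Set.mem_iUnion]
      exact ⟨g, hg, hgA⟩
    rw [hFempty] at hx
    exact hx
  refine ⟨H * F, hHne.mul hFne, ?_⟩
  intro L hLne
  obtain ⟨y, hy⟩ := hT (F * L) (hFne.mul hLne)
  simp only [Set.mem_iInter] at hy
  refine ⟨y, ?_⟩
  simp only [Set.mem_iInter]
  intro l hl
  obtain ⟨f, hf, hfA⟩ := key (l * y)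
  have hmem := hy (f * l) (Finset.mul_mem_mul hf hl)
  simp only [preim, Set.mem_setOf_eq, Set.mem_iUnion] at hmem ⊢
  obtain ⟨g, hg, hgAB⟩ := hmem
  refine ⟨g * f, Finset.mul_mem_mul hg hf, ?_⟩
  have heq : g * f * (l * y) = g * (f * l * y) := by
    simp only [mul_assoc]
  rw [heq]
  rcases hgAB with hA' | hB'
  · rw [mul_assoc] at hA'
    exact absurd hA' (hfA g hg)
  · exact hB'
end

section
/- Let F and G be filters on a discrete semigroup S. A set A ⊆ S is (F,G)-thick if and only if there exists an ultrafilter q extending G such that for every ultrafilter p extending F, A ∈ p·q (in βS). -/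
open Filter Set

lemma IsSetFilter.univMem {X : Type*} {F : Set (Set X)} (hF : IsSetFilter F) :
    Set.univ ∈ F := by
  obtain ⟨⟨⟨A, hA⟩, _, hup⟩, _⟩ := hF
  exact hup A _ hA (Set.subset_univ A)

/-- Convert an `IsSetFilter` family to a mathlib `Filter`. -/
def IsSetFilter.toFilter {X : Type*} {F : Set (Set X)} (hF : IsSetFilter F) : Filter X where
  sets := F
  univ_sets := hF.univMem
  sets_of_superset := fun h hsub => hF.1.2.2 _ _ h hsub
  inter_sets := fun h1 h2 => hF.2 _ _ h1 h2

lemma IsSetFilter.mem_toFilter {X : Type*} {F : Set (Set X)} (hF : IsSetFilter F) {s : Set X} :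
    s ∈ hF.toFilter ↔ s ∈ F := Iff.rfl

lemma IsSetFilter.toFilter_neBot {X : Type*} {F : Set (Set X)} (hF : IsSetFilter F) :
    hF.toFilter.NeBot := by
  rw [Filter.neBot_iff]
  intro h
  apply hF.1.2.1
  have : (∅ : Set X) ∈ hF.toFilter := by rw [h]; exact Filter.mem_bot
  exact this

lemma ultrafilter_isUltra {X : Type*} (u : Ultrafilter X) : IsUltra {A : Set X | A ∈ u} := by
  have hstack : IsStack {A : Set X | A ∈ u} :=
    ⟨⟨Set.univ, Filter.univ_mem⟩, fun h => Filter.empty_notMem (u : Filter X) h,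
      fun A B hA hAB => Filter.mem_of_superset hA hAB⟩
  exact ⟨⟨hstack, fun A B hA hB => Filter.inter_mem hA hB⟩,
    ⟨hstack, fun A B h => (Ultrafilter.union_mem_iff).1 h⟩⟩

theorem stmt_14 {S : Type*} [Semigroup S] (F G : Set (Set S))
    (hF : IsSetFilter F) (hG : IsSetFilter G) (A : Set S) :
    A ∈ ThickRel F G ↔
      ∃ q : Set (Set S), IsUltra q ∧ G ⊆ q ∧
        ∀ p : Set (Set S), IsUltra p → F ⊆ p → A ∈ uprod p q := by
  classical
  constructor
  · rintro ⟨B, hB, hthick⟩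
    set S₀ : Set (Set S) := G ∪ ((fun h => preim h A) '' B) with hS₀
    have hmeets : ∀ C ∈ G, ∀ H : Finset S, ↑H ⊆ B →
        (C ∩ ⋂ h ∈ H, preim h A).Nonempty := by
      intro C hC H hHB
      rcases H.eq_empty_or_nonempty with rfl | hne
      · simp only [Finset.notMem_empty, Set.iInter_of_empty, Set.iInter_univ, Set.inter_univ]
        rcases C.eq_empty_or_nonempty with rfl | h
        · exact absurd hC hG.1.2.1
        · exact h
      · have hm := hthick H hne hHB
        by_contra hemp
        rw [Set.not_nonempty_iff_eq_empty] at hemp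
        have hsub : C ⊆ (⋂ h ∈ H, preim h A)ᶜ := by
          intro x hx hx'
          exact Set.eq_empty_iff_forall_notMem.1 hemp x ⟨hx, hx'⟩
        exact hm (hG.1.2.2 _ _ hC hsub)
    have hkey : ∀ t : Set (Set S), t.Finite → t ⊆ S₀ →
        ∃ C ∈ G, ∃ H : Finset S, ↑H ⊆ B ∧ C ∩ (⋂ h ∈ H, preim h A) ⊆ ⋂₀ t := by
      intro t htfin
      refine Set.Finite.induction_on _ htfin ?_ ?_
      · intro _
        refine ⟨Set.univ, hG.univMem, ∅, by simp, by simp⟩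
      · intro a s _ _ IH hsub
        have has : a ∈ S₀ := hsub (Set.mem_insert _ _)
        have hs : s ⊆ S₀ := fun x hx => hsub (Set.mem_insert_of_mem _ hx)
        obtain ⟨C, hC, H, hHB, hsubset⟩ := IH hs
        rw [Set.sInter_insert]
        rcases has with haG | ⟨h, hhB, rfl⟩
        · refine ⟨C ∩ a, hG.2 _ _ hC haG, H, hHB, ?_⟩
          rintro x ⟨⟨hxC, hxa⟩, hxH⟩
          exact ⟨hxa, hsubset ⟨hxC, hxH⟩⟩
        · refine ⟨C, hC, insert h H, ?_, ?_⟩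
          · rw [Finset.coe_insert]
            exact Set.insert_subset hhB hHB
          · rw [Finset.set_biInter_insert]
            rintro x ⟨hxC, hxh, hxH⟩
            exact ⟨hxh, hsubset ⟨hxC, hxH⟩⟩
    have hne : (Filter.generate S₀).NeBot := by
      rw [Filter.generate_neBot_iff]
      intro t hts htfin
      obtain ⟨C, hC, H, hHB, hsubset⟩ := hkey t htfin hts
      exact (hmeets C hC H hHB).mono hsubset
    obtain ⟨u, hu⟩ := @Ultrafilter.exists_le _ (Filter.generate S₀) hne
    refine ⟨{A : Set S | A ∈ u}, ultrafilter_isUltra u, ?_, ?_⟩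
    · intro C hC
      exact hu (Filter.mem_generate_of_mem (Or.inl hC))
    · intro p hp hFp
      have hBsub : B ⊆ {x | preim x A ∈ {A : Set S | A ∈ u}} := by
        intro h hh
        exact hu (Filter.mem_generate_of_mem (Or.inr ⟨h, hh, rfl⟩))
      exact hp.1.1.2.2 _ _ (hFp hB) hBsub
  · rintro ⟨q, hq, hGq, hA⟩
    set X : Set S := {x | preim x A ∈ q} with hX
    have hXF : X ∈ F := by
      by_contra hXn
      have hne : (hF.toFilter ⊓ 𝓟 Xᶜ).NeBot := by
        rw [Filter.inf_principal_neBot_iff]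
        intro U hU
        by_contra hemp
        rw [Set.not_nonempty_iff_eq_empty] at hemp
        have hsub : U ⊆ X := by
          intro x hx
          by_contra hxX
          exact Set.eq_empty_iff_forall_notMem.1 hemp x ⟨hx, hxX⟩
        exact hXn (hF.1.2.2 _ _ hU hsub)
      obtain ⟨u, hu⟩ := Ultrafilter.exists_le (hF.toFilter ⊓ 𝓟 Xᶜ)
      have h1 : F ⊆ {A : Set S | A ∈ u} := fun C hC => hu (Filter.mem_inf_of_left hC)
      have h2 : X ∈ u := hA {A : Set S | A ∈ u} (ultrafilter_isUltra u) h1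
      have h3 : Xᶜ ∈ u := hu (Filter.mem_inf_of_right (Filter.mem_principal_self _))
      have : (∅ : Set S) ∈ u := by
        have := Filter.inter_mem h2 h3
        rwa [Set.inter_compl_self] at this
      exact Filter.empty_notMem (u : Filter S) this
    refine ⟨X, hXF, ?_⟩
    intro H hHne hHB
    have hmem : (⋂ h ∈ H, preim h A) ∈ hq.1.toFilter := by
      rw [Filter.biInter_finset_mem]
      intro h hh
      exact hHB hh
    intro hcompl
    have h2 : (⋂ h ∈ H, preim h A)ᶜ ∈ q := hGq hcompl
    have : (∅ : Set S) ∈ q := by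
      have := hq.1.2 _ _ hmem h2
      rwa [Set.inter_compl_self] at this
    exact hq.1.1.2.1 this
end

section
/- Let F and G be filters on a discrete semigroup S. A set A ⊆ S is (F,G*)-thick if and only if A ∈ F·G, where F·G = {A ⊆ S : {x ∈ S : x⁻¹A ∈ G} ∈ F}. -/
theorem stmt_15 {S : Type*} [Semigroup S] (F G : Set (Set S))
    (hF : IsSetFilter F) (hG : IsSetFilter G) (A : Set S) :
    A ∈ ThickRel F (mesh G) ↔ {x : S | preim x A ∈ G} ∈ F := by
  classical
  have hmm : mesh (mesh G) = G := by
    ext B; simp [mesh]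
  have hinter : ∀ (H : Finset S), H.Nonempty → (∀ h ∈ H, preim h A ∈ G) →
      (⋂ h ∈ H, preim h A) ∈ G := by
    intro H hne
    induction hne using Finset.Nonempty.cons_induction with
    | singleton a => intro hmem; simpa using hmem a (by simp)
    | cons a s ha hs ih =>
      intro hmem
      rw [Finset.cons_eq_insert, Finset.set_biInter_insert]
      exact hG.2 _ _ (hmem a (by simp)) (ih (fun h hh => hmem h (by simp [hh])))
  constructor
  · rintro ⟨B, hB, hprop⟩
    refine hF.1.2.2 B _ hB ?_
    intro b hb
    have := hprop {b} (by simp) (by simpa using hb)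
    simp only [Finset.mem_singleton, Set.iInter_iInter_eq_left, hmm] at this
    exact this
  · intro h
    refine ⟨_, h, ?_⟩
    intro H hne hsub
    rw [hmm]
    exact hinter H hne (fun x hx => hsub hx)
end

section
/- Let F and G be filters on a discrete semigroup S. A set A ⊆ S is (F*,G)-thick if and only if there exist ultrafilters p ⊇ F and q ⊇ G with A ∈ p·q. -/
open Filter Set in
private def setFilter {S : Type*} (F : Set (Set S)) (hF : IsSetFilter F) : Filter S where
  sets := F
  univ_sets := by
    obtain ⟨⟨⟨A, hA⟩, _, hup⟩, _⟩ := hF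
    exact hup A _ hA (Set.subset_univ A)
  sets_of_superset := fun h hsub => hF.1.2.2 _ _ h hsub
  inter_sets := fun h1 h2 => hF.2 _ _ h1 h2

private lemma setFilter_neBot {S : Type*} (F : Set (Set S)) (hF : IsSetFilter F) :
    (setFilter F hF).NeBot :=
  ⟨fun h => hF.1.2.1 (Filter.empty_mem_iff_bot.2 h : ∅ ∈ F)⟩

private lemma ultra_isUltra {S : Type*} (u : Ultrafilter S) : IsUltra (u : Filter S).sets := by
  have hstack : IsStack (u : Filter S).sets :=
    ⟨⟨Set.univ, Filter.univ_mem⟩, Filter.empty_notMem _,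
      fun A B hA hAB => Filter.mem_of_superset hA hAB⟩
  exact ⟨⟨hstack, fun A B hA hB => Filter.inter_mem hA hB⟩,
    ⟨hstack, fun A B h => Ultrafilter.union_mem_iff.1 h⟩⟩

private lemma finset_inter_mem {S : Type*} {q : Set (Set S)} (hq : IsSetFilter q)
    (f : S → Set S) (H : Finset S) (h : ∀ x ∈ H, f x ∈ q) : (⋂ x ∈ H, f x) ∈ q := by
  classical
  induction H using Finset.induction_on with
  | empty =>
      simp only [Finset.notMem_empty, Set.iInter_of_empty, Set.iInter_univ]
      obtain ⟨⟨⟨A, hA⟩, _, hup⟩, _⟩ := hq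
      exact hup A _ hA (Set.subset_univ A)
  | @insert a s _ ih =>
      rw [Finset.set_biInter_insert]
      exact hq.2 _ _ (h a (Finset.mem_insert_self a s))
        (ih fun x hxs => h x (Finset.mem_insert_of_mem hxs))

theorem stmt_16 {S : Type*} [Semigroup S] (F G : Set (Set S))
    (hF : IsSetFilter F) (hG : IsSetFilter G) (A : Set S) :
    A ∈ ThickRel (mesh F) G ↔
      ∃ p q : Set (Set S), IsUltra p ∧ F ⊆ p ∧ IsUltra q ∧ G ⊆ q ∧
        A ∈ uprod p q := by
  classical
  constructor
  · rintro ⟨B, hB, hBH⟩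
    set fF := setFilter F hF with hfF
    set fG := setFilter G hG with hfG
    haveI := setFilter_neBot F hF
    haveI := setFilter_neBot G hG
    have hinf : (fF ⊓ Filter.principal B).NeBot := by
      rw [Filter.neBot_iff]
      intro h
      exact hB (Filter.inf_principal_eq_bot.1 h : Bᶜ ∈ F)
    obtain ⟨p, hp⟩ := Ultrafilter.exists_le (fF ⊓ Filter.principal B)
    set g : Filter S := fG ⊓ ⨅ (h : B), Filter.principal (preim (h : S) A) with hgdef
    have hg : g.NeBot := by
      rw [Filter.neBot_iff]
      intro h0
      have hemp : (∅ : Set S) ∈ g := by rw [h0]; exact Filter.mem_bot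
      rw [Filter.mem_inf_iff] at hemp
      obtain ⟨C, hC, s, hs, hCs⟩ := hemp
      rw [Filter.mem_iInf'] at hs
      obtain ⟨I, Ifin, V, hV, -, hUI, -⟩ := hs
      rcases I.eq_empty_or_nonempty with rfl | ⟨i0, hi0⟩
      · simp only [Set.mem_empty_iff_false, Set.iInter_of_empty, Set.iInter_univ] at hUI
        subst hUI
        rw [Set.inter_univ] at hCs
        have : C = ∅ := hCs.symm
        exact hG.1.2.1 (this ▸ hC)
      · set H : Finset S := (Ifin.image (fun i : B => (i : S))).toFinset with hHdef
        have hHne : H.Nonempty := by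
          refine ⟨(i0 : S), ?_⟩
          rw [hHdef, Set.Finite.mem_toFinset]
          exact ⟨i0, hi0, rfl⟩
        have hHsub : ↑H ⊆ B := by
          intro x hx
          rw [Finset.mem_coe, hHdef, Set.Finite.mem_toFinset] at hx
          obtain ⟨i, _, rfl⟩ := hx
          exact i.2
        have hmesh := hBH H hHne hHsub
        have hsubs : (⋂ h ∈ H, preim h A) ⊆ s := by
          rw [hUI]
          intro x hx
          rw [Set.mem_iInter₂]
          intro i hiI
          have hxi : x ∈ preim (i : S) A := by
            have hiH : (i : S) ∈ H := by
              rw [hHdef, Set.Finite.mem_toFinset]; exact ⟨i, hiI, rfl⟩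
            exact Set.mem_iInter₂.1 hx _ hiH
          exact Filter.mem_principal.1 (hV i) hxi
        have hCsub : C ⊆ (⋂ h ∈ H, preim h A)ᶜ := by
          intro x hxC hxI
          have : x ∈ C ∩ s := ⟨hxC, hsubs hxI⟩
          rw [← hCs] at this
          exact this
        exact hmesh (hG.1.2.2 _ _ hC hCsub)
    obtain ⟨q, hq⟩ := Ultrafilter.exists_le g
    refine ⟨(p : Filter S).sets, (q : Filter S).sets, ultra_isUltra p, ?_, ultra_isUltra q, ?_, ?_⟩
    · intro C hC
      exact hp (Filter.mem_inf_of_left (hC : C ∈ fF))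
    · intro C hC
      exact hq (Filter.mem_inf_of_left (hC : C ∈ fG))
    · show {x | preim x A ∈ (q : Filter S).sets} ∈ (p : Filter S).sets
      have hBp : B ∈ (p : Filter S) := hp (Filter.mem_inf_of_right (Filter.mem_principal_self B))
      refine Filter.mem_of_superset hBp ?_
      intro x hx
      show preim x A ∈ (q : Filter S)
      refine hq ?_
      have : g ≤ Filter.principal (preim x A) :=
        le_trans inf_le_right (iInf_le _ (⟨x, hx⟩ : B))
      exact this (Filter.mem_principal_self _)
  · rintro ⟨p, q, hpu, hFp, hqu, hGq, hA⟩
    refine ⟨{x | preim x A ∈ q}, ?_, ?_⟩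
    · intro hc
      have h2 : {x | preim x A ∈ q}ᶜ ∈ p := hFp hc
      have h3 := hpu.1.2 _ _ hA h2
      rw [Set.inter_compl_self] at h3
      exact hpu.1.1.2.1 h3
    · intro H hHne hHsub
      have hmem : (⋂ h ∈ H, preim h A) ∈ q :=
        finset_inter_mem hqu.1 _ H (fun x hx => hHsub (Finset.mem_coe.2 hx))
      intro hc
      have h2 := hGq hc
      have h3 := hqu.1.2 _ _ hmem h2
      rw [Set.inter_compl_self] at h3
      exact hqu.1.1.2.1 h3
end
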